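/- Let H be an n-dimensional Haar subspace of C(X) and suppose X contains at least n+1 points. Let x₁,…,x_{n+1} ∈ X be distinct points, let σ₁,…,σ_{n+1} ∈ {−1, +1}, and let λ₁,…,λ_{n+1} be positive real numbers such that Σ_{i=1}^{n+1} λᵢ σᵢ h(xᵢ) = 0 for all h ∈ H. Then γ := min over { h ∈ H : ‖h‖ = 1 } of max_{1≤i≤n+1} σᵢ h(xᵢ) is attained and is strictly positive. -/
import Mathlib


/-- `H` is an `n`-dimensional Haar subspace of `C(X, ℝ)`: it has dimension `n`
and interpolation at any `n` distinct points is uniquely solvable in `H`. -/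
def IsHaarSubspace {X : Type*} [TopologicalSpace X] (n : ℕ)
    (H : Submodule ℝ C(X, ℝ)) : Prop :=
  Module.finrank ℝ H = n ∧
    ∀ x : Fin n → X, Function.Injective x → ∀ r : Fin n → ℝ,
      ∃! f : H, ∀ i, (f : C(X, ℝ)) (x i) = r i

/-- If `x₁, …, x_{n+1}` are distinct points, `σᵢ ∈ {−1, +1}` and `λᵢ > 0`
satisfy `∑ λᵢ σᵢ h(xᵢ) = 0` for all `h` in the `n`-dimensional Haar subspace
`H`, then `γ := min { max_i σᵢ h(xᵢ) : h ∈ H, ‖h‖ = 1 }` is attained and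
strictly positive. -/
theorem haar_sign_min_max_pos
    {X : Type*} [TopologicalSpace X] [CompactSpace X] [T2Space X]
    {n : ℕ} (hn : 0 < n)
    (H : Submodule ℝ C(X, ℝ)) (hHaar : IsHaarSubspace n H)
    (hX : ∃ y : Fin (n + 1) → X, Function.Injective y)
    (x : Fin (n + 1) → X) (hx : Function.Injective x)
    (σ : Fin (n + 1) → ℝ) (hσ : ∀ i, σ i = 1 ∨ σ i = -1)
    (lam : Fin (n + 1) → ℝ) (hlam : ∀ i, 0 < lam i)
    (horth : ∀ h ∈ H, (∑ i, lam i * σ i * h (x i)) = 0) :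
    ∃ γ : ℝ, 0 < γ ∧
      IsLeast ((fun h : C(X, ℝ) => ⨆ i : Fin (n + 1), σ i * h (x i)) ''
        {h : C(X, ℝ) | h ∈ H ∧ ‖h‖ = 1}) γ := by
  obtain ⟨hrank, hinterp⟩ := hHaar
  haveI : FiniteDimensional ℝ H := FiniteDimensional.of_finrank_pos (hrank ▸ hn)
  -- the constrained set is the image of the unit sphere of H
  have hset : {h : C(X, ℝ) | h ∈ H ∧ ‖h‖ = 1}
      = (fun f : H => (f : C(X, ℝ))) '' Metric.sphere (0 : H) 1 := by
    ext h
    constructor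
    · rintro ⟨hH, hnorm⟩
      exact ⟨⟨h, hH⟩, by simp [Submodule.norm_coe, hnorm], rfl⟩
    · rintro ⟨f, hf, rfl⟩
      simp only [mem_sphere_iff_norm, sub_zero] at hf
      exact ⟨f.2, hf⟩
  -- the set is compact
  have hcomp : IsCompact {h : C(X, ℝ) | h ∈ H ∧ ‖h‖ = 1} := by
    rw [hset]
    exact (isCompact_sphere (0 : H) 1).image continuous_subtype_val
  -- the set is nonempty
  have hne : {h : C(X, ℝ) | h ∈ H ∧ ‖h‖ = 1}.Nonempty := by
    obtain ⟨f, hf⟩ : ∃ f : H, f ≠ 0 := by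
      have : Nontrivial H := Module.nontrivial_of_finrank_pos (R := ℝ) (hrank ▸ hn)
      exact exists_ne 0
    have hfn : ‖(f : C(X, ℝ))‖ ≠ 0 := by
      simpa [norm_eq_zero, Submodule.coe_eq_zero] using hf
    refine ⟨‖(f : C(X, ℝ))‖⁻¹ • (f : C(X, ℝ)), H.smul_mem _ f.2, ?_⟩
    have hns := norm_smul (‖(f : C(X, ℝ))‖⁻¹) (f : C(X, ℝ))
    rw [hns, norm_inv, norm_norm, inv_mul_cancel₀ hfn]
  -- the function is continuous
  have hcont : Continuous (fun h : C(X, ℝ) => ⨆ i : Fin (n + 1), σ i * h (x i)) := by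
    have : ∀ h : C(X, ℝ), (⨆ i : Fin (n + 1), σ i * h (x i))
        = Finset.univ.sup' Finset.univ_nonempty (fun i => σ i * h (x i)) := by
      intro h; rw [Finset.sup'_univ_eq_ciSup]
    simp only [this]
    apply Continuous.finset_sup'_apply
    intro i _
    exact continuous_const.mul (continuous_eval_const (x i))
  -- the image is compact & nonempty, so has a least element
  obtain ⟨γ, hγmem, hγle⟩ :=
    (hcomp.image hcont).exists_isLeast (hne.image _)
  refine ⟨γ, ?_, hγmem, hγle⟩
  -- positivity
  obtain ⟨h, ⟨hH, hnorm⟩, rfl⟩ := hγmem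
  by_contra hle
  push_neg at hle
  have hbdd : BddAbove (Set.range fun i : Fin (n + 1) => σ i * h (x i)) :=
    (Set.finite_range _).bddAbove
  have hterm : ∀ i, σ i * h (x i) ≤ 0 := fun i =>
    le_trans (le_ciSup hbdd i) hle
  have hzero : ∀ i, h (x i) = 0 := by
    have hsum := horth h hH
    have hnp : ∀ i ∈ Finset.univ, lam i * σ i * h (x i) ≤ 0 := by
      intro i _
      have := mul_nonpos_of_nonneg_of_nonpos (le_of_lt (hlam i)) (hterm i)
      linarith [this, mul_assoc (lam i) (σ i) (h (x i))]
    intro i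
    have := (Finset.sum_eq_zero_iff_of_nonpos hnp).mp hsum i (Finset.mem_univ i)
    have hσne : σ i ≠ 0 := by rcases hσ i with h1 | h1 <;> simp [h1]
    have hlne : lam i ≠ 0 := ne_of_gt (hlam i)
    rcases mul_eq_zero.mp this with h' | h'
    · exact absurd h' (mul_ne_zero hlne hσne)
    · exact h'
  -- h vanishes at n distinct points, so h = 0 by Haar uniqueness
  have hxinj : Function.Injective (fun i : Fin n => x (Fin.castSucc i)) :=
    fun a b hab => Fin.castSucc_injective n (hx hab)
  obtain ⟨f, hf, huniq⟩ := hinterp (fun i => x (Fin.castSucc i)) hxinj 0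
  have h1 : (⟨h, hH⟩ : H) = f := huniq _ (fun i => hzero (Fin.castSucc i))
  have h2 : (0 : H) = f := huniq _ (fun i => by simp)
  have : h = 0 := by
    have := h1.trans h2.symm
    simpa [Submodule.mk_eq_zero] using this
  rw [this] at hnorm
  simp at hnorm
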